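/- Let a,b,c ∈ ℂ and n ∈ ℕ, and define the continuous dual Hahn polynomial function y : ℂ → ℂ by y(x) = Σ_{k=0}^{n} [(−n)_k / k!]·(a+b+k)_{n−k}·(a+c+k)_{n−k}·∏_{j=0}^{k−1}((a + j)² + x²). Then for every x ∈ ℂ with x·(x − i/2)·(x + i/2) ≠ 0: (−(a + b + c)·x² + abc)·(𝒟(𝒟y))(x) + (x² − (ab + ac + bc))·(𝒮(𝒟y))(x) − n·y(x) = 0. -/

import Mathlib

open Complex Finset

/-- Wilson divided-difference operator. -/
noncomputable def Dw (f : ℂ → ℂ) (x : ℂ) : ℂ :=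
  (f (x + I/2) - f (x - I/2)) / (2 * I * x)

/-- Averaging operator. -/
noncomputable def Sw (f : ℂ → ℂ) (x : ℂ) : ℂ :=
  (f (x + I/2) + f (x - I/2)) / 2

/-- Pochhammer symbol (t)_m = ∏_{j=0}^{m−1}(t + j). -/
noncomputable def poch (t : ℂ) (m : ℕ) : ℂ :=
  ∏ j ∈ Finset.range m, (t + j)

/-- The continuous dual Hahn polynomial S_n(x²; a,b,c) in division-free form. -/
noncomputable def cdHahn (a b c : ℂ) (n : ℕ) (x : ℂ) : ℂ :=
  ∑ k ∈ Finset.range (n+1),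
    (poch (-(n : ℂ)) k / (Nat.factorial k : ℂ))
      * poch (a + b + k) (n - k) * poch (a + c + k) (n - k)
      * ∏ j ∈ Finset.range k, ((a + j)^2 + x^2)

/-! ### Auxiliary definitions and lemmas -/

noncomputable def phiP (a : ℂ) (k : ℕ) (x : ℂ) : ℂ :=
  ∏ j ∈ Finset.range k, ((a + j)^2 + x^2)

noncomputable def psiP (a : ℂ) (k : ℕ) (x : ℂ) : ℂ :=
  ∏ j ∈ Finset.range k, ((a + j)*(a + j + 1) + x^2 + I*x)

noncomputable def psiM (a : ℂ) (k : ℕ) (x : ℂ) : ℂ :=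
  ∏ j ∈ Finset.range k, ((a + j)*(a + j + 1) + x^2 - I*x)

lemma phiP_zero (a x : ℂ) : phiP a 0 x = 1 := rfl
lemma psiP_zero (a x : ℂ) : psiP a 0 x = 1 := rfl
lemma psiM_zero (a x : ℂ) : psiM a 0 x = 1 := rfl

lemma phiP_succ (a : ℂ) (k : ℕ) (x : ℂ) :
    phiP a (k+1) x = phiP a k x * ((a + k)^2 + x^2) :=
  Finset.prod_range_succ _ _

lemma psiP_succ (a : ℂ) (k : ℕ) (x : ℂ) :
    psiP a (k+1) x = psiP a k x * ((a + k)*(a + k + 1) + x^2 + I*x) :=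
  Finset.prod_range_succ _ _

lemma psiM_succ (a : ℂ) (k : ℕ) (x : ℂ) :
    psiM a (k+1) x = psiM a k x * ((a + k)*(a + k + 1) + x^2 - I*x) :=
  Finset.prod_range_succ _ _

lemma lemN (a x : ℂ) (k : ℕ) :
    (a - I*x) * psiP a k x = (a + k - I*x) * phiP a k x := by
  induction k with
  | zero => simp [psiP_zero, phiP_zero]
  | succ k ih =>
    rw [psiP_succ, phiP_succ]
    push_cast
    linear_combination ((a+(k:ℂ))*(a+(k:ℂ)+1)+x^2+I*x) * ih
      + (-(x^2) * phiP a k x) * Complex.I_sq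

lemma lemN' (a x : ℂ) (k : ℕ) :
    (a + I*x) * psiM a k x = (a + k + I*x) * phiP a k x := by
  induction k with
  | zero => simp [psiM_zero, phiP_zero]
  | succ k ih =>
    rw [psiM_succ, phiP_succ]
    push_cast
    linear_combination ((a+(k:ℂ))*(a+(k:ℂ)+1)+x^2-I*x) * ih
      + (-(x^2) * phiP a k x) * Complex.I_sq

lemma lemP (a x : ℂ) (k : ℕ) :
    phiP a (k+1) (x+I) = (a - 1 + I*x) * (a + k + 1 - I*x) * psiP a k x := by
  induction k with
  | zero =>
    rw [phiP_succ, phiP_zero, psiP_zero]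
    push_cast
    linear_combination (1+x^2) * Complex.I_sq
  | succ k ih =>
    rw [phiP_succ, ih, psiP_succ]
    push_cast
    linear_combination (psiP a k x * (a*(k:ℂ) - a*x^2 + a^2 + I*(k:ℂ)*x + 2*I*x
      - I*x^3 - I^2*x^2 - (k:ℂ) - 1 + x^2)) * Complex.I_sq

lemma lemP' (a x : ℂ) (k : ℕ) :
    phiP a (k+1) (x-I) = (a - 1 - I*x) * (a + k + 1 + I*x) * psiM a k x := by
  induction k with
  | zero =>
    rw [phiP_succ, phiP_zero, psiM_zero]
    push_cast
    linear_combination (1+x^2) * Complex.I_sq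
  | succ k ih =>
    rw [phiP_succ, ih, psiM_succ]
    push_cast
    linear_combination (psiM a k x * (a*(k:ℂ) - a*x^2 + a^2 - I*(k:ℂ)*x - 2*I*x
      + I*x^3 - I^2*x^2 - (k:ℂ) - 1 + x^2)) * Complex.I_sq

lemma lemQ (a x : ℂ) (k : ℕ) :
    phiP a (k+1) x = (a - I*x) * (a + k + I*x) * psiP a k x := by
  rw [phiP_succ]
  linear_combination (-(a+(k:ℂ)+I*x)) * lemN a x k + (phiP a k x * x^2) * Complex.I_sq

lemma lemQ' (a x : ℂ) (k : ℕ) :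
    phiP a (k+1) x = (a + I*x) * (a + k - I*x) * psiM a k x := by
  rw [phiP_succ]
  linear_combination (-(a+(k:ℂ)-I*x)) * lemN' a x k + (phiP a k x * x^2) * Complex.I_sq

lemma lemLp (a x : ℂ) (k : ℕ) :
    phiP a (k+1) (x+I) - phiP a (k+1) x = ((k:ℂ)+1) * (2*I*x - 1) * psiP a k x := by
  linear_combination lemP a x k - lemQ a x k

lemma lemLm (a x : ℂ) (k : ℕ) :
    phiP a (k+1) (x-I) - phiP a (k+1) x = -(((k:ℂ)+1) * (2*I*x + 1)) * psiM a k x := by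
  linear_combination lemP' a x k - lemQ' a x k

lemma lemC (a b c x : ℂ) (k : ℕ) :
    (a-I*x)*(b-I*x)*(c-I*x) * psiP a k x - (a+I*x)*(b+I*x)*(c+I*x) * psiM a k x
      = 2*I*x * (phiP a (k+1) x - (a+b+k)*(a+c+k) * phiP a k x) := by
  rw [phiP_succ]
  linear_combination ((b-I*x)*(c-I*x)) * lemN a x k - ((b+I*x)*(c+I*x)) * lemN' a x k
    + (-(2*phiP a k x*I*x^3)) * Complex.I_sq

lemma poch_succ (t : ℂ) (m : ℕ) : poch t (m+1) = poch t m * (t + m) :=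
  Finset.prod_range_succ _ _

lemma poch_shift (t : ℂ) (m : ℕ) : poch t (m+1) = t * poch (t+1) m := by
  unfold poch
  rw [Finset.prod_range_succ']
  push_cast
  rw [Finset.prod_congr rfl (fun j _ => by ring :
    ∀ j ∈ Finset.range m, (t + ((j:ℂ) + 1)) = (t + 1 + (j:ℂ)))]
  ring

noncomputable def cdc (a b c : ℂ) (n k : ℕ) : ℂ :=
  (poch (-(n : ℂ)) k / (Nat.factorial k : ℂ))
    * poch (a + b + k) (n - k) * poch (a + c + k) (n - k)

lemma cdc_rec (a b c : ℂ) (n : ℕ) {k : ℕ} (hk : k < n) :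
    ((k:ℂ)+1) * cdc a b c n (k+1) * ((a+b+k)*(a+c+k)) = ((k:ℂ) - n) * cdc a b c n k := by
  unfold cdc
  have h1 : n - k = (n - (k+1)) + 1 := by omega
  rw [h1, poch_succ (-(n:ℂ)) k]
  have e1 : a + b + ((k:ℕ)+1:ℕ) = (a + b + (k:ℂ)) + 1 := by push_cast; ring
  have e2 : a + c + ((k:ℕ)+1:ℕ) = (a + c + (k:ℂ)) + 1 := by push_cast; ring
  rw [e1, e2, poch_shift (a+b+(k:ℂ)) (n-(k+1)), poch_shift (a+c+(k:ℂ)) (n-(k+1))]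
  rw [Nat.factorial_succ]
  have hf : ((Nat.factorial k : ℕ) : ℂ) ≠ 0 := Nat.cast_ne_zero.mpr (Nat.factorial_ne_zero k)
  have hk1 : ((k:ℂ)+1) ≠ 0 := by
    have := Nat.cast_ne_zero (R := ℂ).mpr (Nat.succ_ne_zero k)
    push_cast at this; exact this
  push_cast
  field_simp
  ring

theorem stmt_16 (a b c : ℂ) (n : ℕ) :
    ∀ x : ℂ, x * (x - I/2) * (x + I/2) ≠ 0 →
      (-(a + b + c) * x^2 + a*b*c) * Dw (Dw (fun t => cdHahn a b c n t)) x
        + (x^2 - (a*b + a*c + b*c)) * Sw (Dw (fun t => cdHahn a b c n t)) x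
        - (n : ℂ) * cdHahn a b c n x = 0 := by
  intro x hx
  have hx1 : x ≠ 0 := fun h => hx (by rw [h]; ring)
  have hx2 : x - I/2 ≠ 0 := fun h => hx (by rw [h]; ring)
  have hx3 : x + I/2 ≠ 0 := fun h => hx (by rw [h]; ring)
  have h2I : (2:ℂ) * I ≠ 0 := mul_ne_zero two_ne_zero I_ne_zero
  have h2Ix : 2 * I * x ≠ 0 := mul_ne_zero h2I hx1
  have hdp : 2*I*x - 1 = 2*I*(x + I/2) := by linear_combination -Complex.I_sq
  have hdm : 2*I*x + 1 = 2*I*(x - I/2) := by linear_combination Complex.I_sq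
  have hp0 : 2*I*x - 1 ≠ 0 := by rw [hdp]; exact mul_ne_zero h2I hx3
  have hm0 : 2*I*x + 1 ≠ 0 := by rw [hdm]; exact mul_ne_zero h2I hx2
  have hyd : ∀ z : ℂ, cdHahn a b c n z
      = ∑ k ∈ Finset.range (n+1), cdc a b c n k * phiP a k z := fun z => rfl
  set F : ℂ := ∑ k ∈ Finset.range n, cdc a b c n (k+1) * (((k:ℂ)+1) * psiP a k x) with hF
  set G : ℂ := ∑ k ∈ Finset.range n, cdc a b c n (k+1) * (((k:ℂ)+1) * psiM a k x) with hG
  have hplus : cdHahn a b c n (x+I) - cdHahn a b c n x = (2*I*x - 1) * F := by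
    rw [hyd, hyd, ← Finset.sum_sub_distrib, hF, Finset.mul_sum, Finset.sum_range_succ']
    simp only [phiP_zero, mul_one, sub_self, add_zero]
    refine Finset.sum_congr rfl (fun k _ => ?_)
    linear_combination cdc a b c n (k+1) * lemLp a x k
  have hminus : cdHahn a b c n x - cdHahn a b c n (x-I) = (2*I*x + 1) * G := by
    rw [hyd, hyd, ← Finset.sum_sub_distrib, hG, Finset.mul_sum, Finset.sum_range_succ']
    simp only [phiP_zero, mul_one, sub_self, add_zero]
    refine Finset.sum_congr rfl (fun k _ => ?_)
    linear_combination (-(cdc a b c n (k+1))) * lemLm a x k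
  have hKey : (a-I*x)*(b-I*x)*(c-I*x) * F - (a+I*x)*(b+I*x)*(c+I*x) * G
      = 2*I*x * ((n:ℂ) * cdHahn a b c n x) := by
    rw [hF, hG, Finset.mul_sum, Finset.mul_sum, ← Finset.sum_sub_distrib]
    have step : ∀ k ∈ Finset.range n,
        (a-I*x)*(b-I*x)*(c-I*x) * (cdc a b c n (k+1) * (((k:ℂ)+1) * psiP a k x))
          - (a+I*x)*(b+I*x)*(c+I*x) * (cdc a b c n (k+1) * (((k:ℂ)+1) * psiM a k x))
        = 2*I*x * ((((k:ℂ)+1) * cdc a b c n (k+1)) * phiP a (k+1) x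
            + ((n:ℂ) - k) * cdc a b c n k * phiP a k x) := by
      intro k hk
      have hC := lemC a b c x k
      have hR := cdc_rec a b c n (Finset.mem_range.mp hk)
      linear_combination (cdc a b c n (k+1) * ((k:ℂ)+1)) * hC
        + (-(2*I*x) * phiP a k x) * hR
    rw [Finset.sum_congr rfl step, ← Finset.mul_sum]
    congr 1
    have e1 : ∑ k ∈ Finset.range n, (((k:ℂ)+1) * cdc a b c n (k+1)) * phiP a (k+1) x
        = ∑ k ∈ Finset.range (n+1), (k:ℂ) * cdc a b c n k * phiP a k x := by
      rw [Finset.sum_range_succ']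
      simp only [Nat.cast_zero, zero_mul, add_zero]
      exact Finset.sum_congr rfl (fun k _ => by push_cast; ring)
    have e2 : ∑ k ∈ Finset.range n, ((n:ℂ) - k) * cdc a b c n k * phiP a k x
        = ∑ k ∈ Finset.range (n+1), ((n:ℂ) - k) * cdc a b c n k * phiP a k x := by
      rw [Finset.sum_range_succ]
      simp
    rw [Finset.sum_add_distrib, e1, e2, ← Finset.sum_add_distrib, hyd, Finset.mul_sum]
    exact Finset.sum_congr rfl (fun k _ => by ring)
  have hDwp : Dw (fun t => cdHahn a b c n t) (x + I/2) = F := by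
    have e : Dw (fun t => cdHahn a b c n t) (x + I/2)
        = (cdHahn a b c n (x+I/2+I/2) - cdHahn a b c n (x+I/2-I/2)) / (2*I*(x+I/2)) := rfl
    rw [e, show x + I/2 + I/2 = x + I by ring, show x + I/2 - I/2 = x by ring, ← hdp, hplus]
    exact mul_div_cancel_left₀ F hp0
  have hDwm : Dw (fun t => cdHahn a b c n t) (x - I/2) = G := by
    have e : Dw (fun t => cdHahn a b c n t) (x - I/2)
        = (cdHahn a b c n (x-I/2+I/2) - cdHahn a b c n (x-I/2-I/2)) / (2*I*(x-I/2)) := rfl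
    rw [e, show x - I/2 + I/2 = x by ring, show x - I/2 - I/2 = x - I by ring, ← hdm, hminus]
    exact mul_div_cancel_left₀ G hm0
  have hDD : Dw (Dw (fun t => cdHahn a b c n t)) x = (F - G) / (2*I*x) := by
    have e : Dw (Dw (fun t => cdHahn a b c n t)) x
        = (Dw (fun t => cdHahn a b c n t) (x + I/2)
            - Dw (fun t => cdHahn a b c n t) (x - I/2)) / (2*I*x) := rfl
    rw [e, hDwp, hDwm]
  have hSD : Sw (Dw (fun t => cdHahn a b c n t)) x = (F + G) / 2 := by
    have e : Sw (Dw (fun t => cdHahn a b c n t)) x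
        = (Dw (fun t => cdHahn a b c n t) (x + I/2)
            + Dw (fun t => cdHahn a b c n t) (x - I/2)) / 2 := rfl
    rw [e, hDwp, hDwm]
  rw [hDD, hSD]
  field_simp
  linear_combination (1 : ℂ) * hKey
    + (-(a+b+c)*x^2*(F-G) + I*x^3*(F+G)) * Complex.I_sq
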